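/- Let Y = {Y_t : t = 0, 1, 2, ...} be a stochastic process on a probability space (Ω, F, P) with values in {0,1} such that every trajectory t ↦ Y_t is nondecreasing. Fix t ≥ 0 and values y_0, ..., y_t in {0,1}, and suppose that P(Y_0 = y_0, ..., Y_{s} = y_{s}) > 0 for every s ≤ t - 1. Then the path probability factorizes through one-step transition probabilities: P(Y_0 = y_0, Y_1 = y_1, ..., Y_t = y_t) = P(Y_0 = y_0) · ∏_{s=1}^{t} P(Y_s = y_s | Y_{s-1} = y_{s-1}). -/

import Mathlib

/-!
Write `J s` for the event that the path of `Y` agrees with `y` up to time `s`. The product formula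
is the chain rule `P (J (s + 1)) = P (J s) * P(Y_{s+1} = y_{s+1} | Y_s = y_s)`, which holds
because a binary nondecreasing process is Markov along every path. From state `1` the next state
is `1` surely, so the one-step conditional probability is `1` or `0`, whatever the history is.
From state `0` the history is forced: `J s` is either empty or the event `{Y s = 0}` itself.
-/

open MeasureTheory

/-- Conditional probability `P(A | B) = P(A ∩ B) / P(B)`. -/
noncomputable def condProb {Ω : Type*} [MeasurableSpace Ω]
    (P : Measure Ω) (A B : Set Ω) : ENNReal :=
  P (A ∩ B) / P B

section condProb

variable {Ω : Type*} [MeasurableSpace Ω] (P : Measure Ω) {A B J : Set Ω}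

lemma measure_inter_eq_mul_condProb [IsFiniteMeasure P] (A B : Set Ω) :
    P (A ∩ B) = P B * condProb P A B :=
  (ENNReal.mul_div_cancel'
    (fun h => measure_mono_null Set.inter_subset_right h)
    (fun h => absurd h (measure_ne_top P B))).symm

lemma measure_inter_eq_mul_condProb_of_subset_of_subset [IsFiniteMeasure P]
    (hJB : J ⊆ B) (hBA : B ⊆ A) : P (A ∩ J) = P J * condProb P A B := by
  rw [condProb, Set.inter_eq_right.mpr (hJB.trans hBA), Set.inter_eq_right.mpr hBA]
  by_cases hB : P B = 0
  · rw [measure_mono_null hJB hB, zero_mul]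
  · rw [ENNReal.div_self hB (measure_ne_top P B), mul_one]

lemma measure_inter_eq_mul_condProb_of_disjoint (hJB : J ⊆ B) (hAB : Disjoint A B) :
    P (A ∩ J) = P J * condProb P A B := by
  have hAJ : A ∩ J = ∅ := (hAB.mono_right hJB).inter_eq
  rw [condProb, hAJ, hAB.inter_eq, measure_empty, ENNReal.zero_div, mul_zero]

end condProb

section PathEvent

variable {Ω : Type*} (Y : ℕ → Ω → ℕ) (y : ℕ → ℕ)

def pathEvent (s : ℕ) : Set Ω :=
  ⋂ r ∈ Finset.range (s + 1), {ω | Y r ω = y r}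

lemma pathEvent_zero : pathEvent Y y 0 = {ω | Y 0 ω = y 0} := by
  simp [pathEvent]

lemma pathEvent_succ (s : ℕ) :
    pathEvent Y y (s + 1) = {ω | Y (s + 1) ω = y (s + 1)} ∩ pathEvent Y y s := by
  rw [pathEvent, Finset.range_add_one, Finset.set_biInter_insert, pathEvent]

lemma pathEvent_subset (s : ℕ) : pathEvent Y y s ⊆ {ω | Y s ω = y s} :=
  Set.biInter_subset_of_mem (Finset.mem_range.mpr s.lt_add_one)

/-- The chain rule for a process that is Markov along the path `y` up to time `t`. -/
lemma measure_pathEvent_eq_mul_prod_condProb [MeasurableSpace Ω] (P : Measure Ω) (t : ℕ)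
    (hMarkov : ∀ s < t, P (pathEvent Y y (s + 1)) =
      P (pathEvent Y y s) * condProb P {ω | Y (s + 1) ω = y (s + 1)} {ω | Y s ω = y s}) :
    P (pathEvent Y y t) =
      P {ω | Y 0 ω = y 0} *
        ∏ s ∈ Finset.Icc 1 t, condProb P {ω | Y s ω = y s} {ω | Y (s - 1) ω = y (s - 1)} := by
  induction t with
  | zero => simp [pathEvent_zero]
  | succ t ih =>
    rw [Finset.prod_Icc_succ_top (Nat.le_add_left 1 t), Nat.add_sub_cancel, ← mul_assoc,
      ← ih fun s hs => hMarkov s (hs.trans t.lt_add_one)]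
    exact hMarkov t t.lt_add_one

variable {Y}

/-- Before a visit to `0` a nondecreasing `ℕ`-valued process is `0`. -/
lemma pathEvent_eq_empty_or_eq_of_monotone (hmono : ∀ ω, Monotone fun t => Y t ω) {s : ℕ}
    (hs : y s = 0) : pathEvent Y y s = ∅ ∨ pathEvent Y y s = {ω | Y s ω = 0} := by
  by_cases hy : ∀ r ≤ s, y r = 0
  · refine Or.inr (Set.Subset.antisymm (hs ▸ pathEvent_subset Y y s) fun ω hω => ?_)
    simp only [pathEvent, Set.mem_iInter, Finset.mem_range]
    intro r hr
    have : Y r ω ≤ Y s ω := hmono ω (Nat.le_of_lt_succ hr)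
    simp only [Set.mem_ofPred_eq, hy r (Nat.le_of_lt_succ hr)] at hω ⊢
    omega
  · push Not at hy
    obtain ⟨r, hrs, hyr⟩ := hy
    refine Or.inl (Set.eq_empty_of_forall_notMem fun ω hω => hyr ?_)
    have hYs : Y s ω = 0 := hs ▸ pathEvent_subset Y y s hω
    have hYr : Y r ω = y r := pathEvent_subset Y y r (Set.biInter_subset_biInter_left
      (by simpa using Nat.succ_le_succ hrs) hω)
    have : Y r ω ≤ Y s ω := hmono ω hrs
    omega

lemma setOf_eq_subset_setOf_succ_eq_one (hbin : ∀ t ω, Y t ω ≤ 1)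
    (hmono : ∀ ω, Monotone fun t => Y t ω) {s a : ℕ} (ha : a ≠ 0) :
    {ω | Y s ω = a} ⊆ {ω | Y (s + 1) ω = 1} := fun ω hω => by
  have : Y s ω ≤ Y (s + 1) ω := hmono ω s.le_succ
  have := hbin (s + 1) ω
  simp only [Set.mem_ofPred_eq] at hω ⊢
  omega

lemma measure_pathEvent_succ_of_binary_monotone [MeasurableSpace Ω] (P : Measure Ω)
    [IsFiniteMeasure P] (hbin : ∀ t ω, Y t ω ≤ 1) (hmono : ∀ ω, Monotone fun t => Y t ω) (s : ℕ) :
    P (pathEvent Y y (s + 1)) =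
      P (pathEvent Y y s) * condProb P {ω | Y (s + 1) ω = y (s + 1)} {ω | Y s ω = y s} := by
  rw [pathEvent_succ]
  by_cases hs : y s = 0
  · rcases pathEvent_eq_empty_or_eq_of_monotone y hmono hs with h | h
    · simp [h]
    · rw [h, ← hs]
      exact measure_inter_eq_mul_condProb P _ _
  · have hB := setOf_eq_subset_setOf_succ_eq_one hbin hmono (s := s) hs
    by_cases hnext : y (s + 1) = 1
    · rw [hnext]
      exact measure_inter_eq_mul_condProb_of_subset_of_subset P (pathEvent_subset Y y s) hB
    · refine measure_inter_eq_mul_condProb_of_disjoint P (pathEvent_subset Y y s) ?_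
      refine Set.disjoint_of_subset_right hB (Set.disjoint_left.mpr fun ω h₁ h₂ => hnext ?_)
      exact h₁.symm.trans h₂

end PathEvent

theorem single_event_path_factorization_general
    {Ω : Type*} [MeasurableSpace Ω] (P : Measure Ω) [IsProbabilityMeasure P]
    (Y : ℕ → Ω → ℕ)
    (hbin : ∀ t ω, Y t ω ≤ 1)
    (hmono : ∀ ω, Monotone fun t => Y t ω)
    (t : ℕ)
    (y : ℕ → ℕ) :
    P (⋂ s ∈ Finset.range (t + 1), {ω | Y s ω = y s}) =
      P {ω | Y 0 ω = y 0} *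
        ∏ s ∈ Finset.Icc 1 t,
          condProb P {ω | Y s ω = y s} {ω | Y (s - 1) ω = y (s - 1)} :=
  measure_pathEvent_eq_mul_prod_condProb Y y P t fun s _ =>
    measure_pathEvent_succ_of_binary_monotone y P hbin hmono s

/-- For a binary, pathwise-nondecreasing state-indicator process `Y`,
the path probability factorizes through one-step transition probabilities:
`P(Y_0 = y_0, …, Y_t = y_t) = P(Y_0 = y_0) · ∏_{s=1}^{t} P(Y_s = y_s | Y_{s-1} = y_{s-1})`. -/
theorem single_event_path_factorization
    {Ω : Type*} [MeasurableSpace Ω] (P : Measure Ω) [IsProbabilityMeasure P]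
    (Y : ℕ → Ω → ℕ)
    (hbin : ∀ t ω, Y t ω ≤ 1)
    (hmono : ∀ ω, Monotone fun t => Y t ω)
    (t : ℕ)
    (y : ℕ → ℕ) (hy : ∀ s ≤ t, y s ≤ 1)
    (hpos : ∀ s < t, P (⋂ r ∈ Finset.range (s + 1), {ω | Y r ω = y r}) ≠ 0) :
    P (⋂ s ∈ Finset.range (t + 1), {ω | Y s ω = y s}) =
      P {ω | Y 0 ω = y 0} *
        ∏ s ∈ Finset.Icc 1 t,
          condProb P {ω | Y s ω = y s} {ω | Y (s - 1) ω = y (s - 1)} :=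
  single_event_path_factorization_general P Y hbin hmono t y
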